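/- arXiv:2503.07646 — 4 statements merged into one kernel-verified Lean document; each statement's English description precedes it below -/
import Mathlib

section
/- If 0 ≤ c⁺ ≤ 1 and −1 ≤ c⁻ ≤ 0, then for every real k, c⁺c⁻ − cos²(k/2) + ((c⁻)² + (c⁺)²)cos²(k/2) + (c⁻)²(c⁺)²(1 − cos²(k/2)) ≤ 0. -/
/-!
The left-hand side is affine in `t = cos²(k/2) ∈ [0, 1]`, so it is a convex combination of its
values at `t = 0` and `t = 1`, namely `c⁺c⁻(1 + c⁺c⁻)` and `(c⁺)² + (c⁻)² + c⁺c⁻ - 1`.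
Both are nonpositive when `c⁺ ∈ [0, 1]` and `c⁻ ∈ [-1, 0]`.
-/

section

variable {a b : ℝ}

theorem mul_add_sq_mul_sq_nonpos (ha₀ : 0 ≤ a) (ha₁ : a ≤ 1) (hb₀ : -1 ≤ b) (hb₁ : b ≤ 0) :
    a * b + a ^ 2 * b ^ 2 ≤ 0 := by
  have hab : -1 ≤ a * b := by nlinarith
  calc a * b + a ^ 2 * b ^ 2 = a * b * (1 + a * b) := by ring
    _ ≤ 0 := mul_nonpos_of_nonpos_of_nonneg (mul_nonpos_of_nonneg_of_nonpos ha₀ hb₁) (by linarith)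

theorem sq_add_sq_add_mul_le_one (ha₀ : 0 ≤ a) (ha₁ : a ≤ 1) (hb₀ : -1 ≤ b) (hb₁ : b ≤ 0) :
    a ^ 2 + b ^ 2 + a * b ≤ 1 := by
  -- `a ↦ a² + ab + b²` is convex, and its values at `a = 0` and `a = 1` are at most `1`.
  have h₀ : 0 ≤ (1 - a) * (1 - b ^ 2) := mul_nonneg (by linarith) (by nlinarith)
  have h₁ : 0 ≤ a * -b * (1 + b) := mul_nonneg (mul_nonneg ha₀ (by linarith)) (by linarith)
  have h₂ : 0 ≤ a * (1 - a) := mul_nonneg ha₀ (by linarith)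
  linear_combination h₀ + h₁ + h₂

end

/-- If `0 ≤ c⁺ ≤ 1` and `−1 ≤ c⁻ ≤ 0`, then for every wave-number `k`,
`c⁺c⁻ − cos²(k/2) + ((c⁻)² + (c⁺)²)cos²(k/2) + (c⁻)²(c⁺)²(1 − cos²(k/2)) ≤ 0`. -/
theorem schur_condition_three (cp cm : ℝ)
    (h1 : 0 ≤ cp) (h2 : cp ≤ 1) (h3 : -1 ≤ cm) (h4 : cm ≤ 0) (k : ℝ) :
    cp * cm - Real.cos (k / 2) ^ 2 + (cm ^ 2 + cp ^ 2) * Real.cos (k / 2) ^ 2 +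
      cm ^ 2 * cp ^ 2 * (1 - Real.cos (k / 2) ^ 2) ≤ 0 := by
  set t := Real.cos (k / 2) ^ 2
  have ht₀ : 0 ≤ t := sq_nonneg _
  have ht₁ : t ≤ 1 := Real.cos_sq_le_one _
  have hconv : (1 - t) • (cp * cm + cp ^ 2 * cm ^ 2) + t • (cp ^ 2 + cm ^ 2 + cp * cm - 1) ≤ 0 :=
    convex_Iic (0 : ℝ) (mul_add_sq_mul_sq_nonpos h1 h2 h3 h4)
      (sub_nonpos.2 (sq_add_sq_add_mul_le_one h1 h2 h3 h4)) (sub_nonneg.2 ht₁) ht₀ (by ring)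
  calc _ = (1 - t) • (cp * cm + cp ^ 2 * cm ^ 2) + t • (cp ^ 2 + cm ^ 2 + cp * cm - 1) := by
        simp only [smul_eq_mul]; ring
    _ ≤ 0 := hconv
end

section
/- Let c⁺ > c⁻ be real numbers. If for all k ∈ [0, 2π] the inequality c⁺c⁻ − cos²(k/2) + ((c⁻)² + (c⁺)²)cos²(k/2) + (c⁻)²(c⁺)²(1 − cos²(k/2)) ≤ 0 holds together with c⁺c⁻((c⁺)² − 1)((c⁻)² − 1) ≤ 0, then 0 ≤ c⁺ ≤ 1 and −1 ≤ c⁻ ≤ 0 (i.e., c⁺c⁻ ≤ 0, |c⁺| ≤ 1 and |c⁻| ≤ 1). -/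
/-! The `k`-dependent condition is affine in `cos² (k / 2) ∈ [0, 1]`, and its two endpoint
values `k = 0` and `k = π` already force the bounds. At `k = π` it reads `p (1 + p) ≤ 0` with
`p = c⁺c⁻`, so `-1 ≤ c⁺c⁻ ≤ 0` and the speeds have opposite signs. If `c⁺ > 1`, the second
condition forces `c⁻ ≤ -1` (or `c⁻ = 0`, excluded by the value at `k = 0`), contradicting
`c⁺c⁻ ≥ -1`; the bound on `c⁻` is the mirror image under `(c⁺, c⁻) ↦ (-c⁻, -c⁺)`. -/

lemma nonneg_and_nonpos_of_mul_nonpos {a b : ℝ} (hba : b < a) (hab : a * b ≤ 0) :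
    0 ≤ a ∧ b ≤ 0 := by
  rcases mul_nonpos_iff.mp hab with hsign | ⟨ha, hb⟩
  · exact hsign
  · linarith

lemma le_one_of_schur_conditions {a b : ℝ} (hb : b ≤ 0) (hk0 : a ^ 2 + b ^ 2 + a * b ≤ 1)
    (hab : -1 ≤ a * b) (h2 : a * b * (a ^ 2 - 1) * (b ^ 2 - 1) ≤ 0) : a ≤ 1 := by
  by_contra! ha
  rcases hb.lt_or_eq with hb | rfl
  · have hb2 : 1 ≤ b ^ 2 := by
      by_contra! hb2
      have : 0 < a * b * (a ^ 2 - 1) * (b ^ 2 - 1) :=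
        mul_pos_of_neg_of_neg
          (mul_neg_of_neg_of_pos (mul_neg_of_pos_of_neg (by linarith) hb) (by nlinarith))
          (by linarith)
      linarith
    have hb1 : b ≤ -1 := by nlinarith
    nlinarith
  · nlinarith

/-- If for all `k ∈ [0, 2π]` the `k`-dependent Schur condition holds together with
`c⁺c⁻((c⁺)² − 1)((c⁻)² − 1) ≤ 0`, then `0 ≤ c⁺ ≤ 1` and `−1 ≤ c⁻ ≤ 0`. -/
theorem schur_conditions_imply_bounds (cp cm : ℝ) (h : cm < cp)
    (hk : ∀ k ∈ Set.Icc (0 : ℝ) (2 * Real.pi),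
      cp * cm - Real.cos (k / 2) ^ 2 + (cm ^ 2 + cp ^ 2) * Real.cos (k / 2) ^ 2 +
        cm ^ 2 * cp ^ 2 * (1 - Real.cos (k / 2) ^ 2) ≤ 0)
    (h2 : cp * cm * (cp ^ 2 - 1) * (cm ^ 2 - 1) ≤ 0) :
    0 ≤ cp ∧ cp ≤ 1 ∧ -1 ≤ cm ∧ cm ≤ 0 := by
  have hk0 : cp ^ 2 + cm ^ 2 + cp * cm ≤ 1 := by
    have := hk 0 ⟨le_rfl, by positivity⟩
    norm_num at this
    linarith
  have hkπ : cp * cm + (cp * cm) ^ 2 ≤ 0 := by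
    have := hk Real.pi ⟨Real.pi_pos.le, by linarith [Real.pi_pos]⟩
    norm_num at this
    linarith
  have hp : -1 ≤ cp * cm ∧ cp * cm ≤ 0 := by constructor <;> nlinarith
  obtain ⟨hcp, hcm⟩ := nonneg_and_nonpos_of_mul_nonpos h hp.2
  have hcp1 := le_one_of_schur_conditions hcm hk0 hp.1 h2
  have hcm1 := le_one_of_schur_conditions (a := -cm) (b := -cp) (by linarith)
    (by linarith) (by linarith) (by linarith)
  exact ⟨hcp, hcp1, by linarith, hcm⟩
end

section
/- The 3×3 matrix M with rows [k·u, ρk_x, ρk_y], [(π*/ρ + ∂ρπ*)k_x, k·u + i(νk² + ηk_x²), iηk_xk_y], [(π*/ρ + ∂ρπ*)k_y, iηk_xk_y, k·u + i(νk² + ηk_y²)] has eigenvalues ω_shear = k·u + iνk², ω_ac± = k·u ± k√(∂ρ(ρπ*)) + i((ν+η)/2)k² up to terms of order O(k³) in the imaginary part; exactly, its characteristic polynomial factorizes so that one eigenvalue is k·u + iνk² when k ≠ 0. -/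
/-! The shear mode `v = (0, -k_y, k_x)` is a transverse velocity perturbation with no density
component: the continuity row gives `ρ k·v = 0`, the pressure column meets the zero density
entry, and the bulk-viscosity block `iη k kᵀ` annihilates `v`, so `M v = (k·u + iνk²) v`.
A nonzero eigenvector makes `M - ω_shear` singular. -/

open Complex Matrix

theorem Matrix.det_sub_smul_one_eq_zero_of_mulVec_eq_smul {n R : Type*} [Fintype n]
    [DecidableEq n] [CommRing R] [IsDomain R] {M : Matrix n n R} {v : n → R} {a : R}
    (hv : v ≠ 0) (h : M *ᵥ v = a • v) : (M - a • (1 : Matrix n n R)).det = 0 :=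
  exists_mulVec_eq_zero_iff.mp ⟨v, hv, by rw [sub_mulVec, smul_mulVec, one_mulVec, h, sub_self]⟩

theorem shear_vector_ne_zero {kx ky : ℝ} (hk : (kx, ky) ≠ (0, 0)) :
    (![0, -(ky : ℂ), kx] : Fin 3 → ℂ) ≠ 0 := by
  contrapose! hk
  have hy := congr_fun hk 1
  have hx := congr_fun hk 2
  simp_all

theorem ns_symbol_mulVec_shear_vector (kx ky ku ρ c ν η : ℝ) :
    !![(ku : ℂ), (ρ * kx : ℝ), (ρ * ky : ℝ);
      (c * kx : ℝ), (ku : ℂ) + I * ((ν * (kx ^ 2 + ky ^ 2) + η * kx ^ 2 : ℝ)),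
        I * ((η * kx * ky : ℝ));
      (c * ky : ℝ), I * ((η * kx * ky : ℝ)),
        (ku : ℂ) + I * ((ν * (kx ^ 2 + ky ^ 2) + η * ky ^ 2 : ℝ))] *ᵥ ![0, -(ky : ℂ), kx]
      = ((ku : ℂ) + I * (ν * (kx ^ 2 + ky ^ 2) : ℝ)) • ![0, -(ky : ℂ), kx] := by
  ext i
  fin_cases i <;> simp [mulVec, dotProduct, Fin.sum_univ_three] <;> ring

open Complex in
theorem ns_symbol_shear_eigenvalue_general (kx ky ρ ν η πs dπs : ℝ)
    (hk : (kx, ky) ≠ (0, 0))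
    (k2 : ℝ) (hk2 : k2 = kx ^ 2 + ky ^ 2)
    (ku : ℝ)
    (M : Matrix (Fin 3) (Fin 3) ℂ)
    (hM : M = !![(ku : ℂ), (ρ * kx : ℝ), (ρ * ky : ℝ);
      ((πs / ρ + dπs) * kx : ℝ), (ku : ℂ) + Complex.I * ((ν * k2 + η * kx ^ 2 : ℝ)),
        Complex.I * ((η * kx * ky : ℝ));
      ((πs / ρ + dπs) * ky : ℝ), Complex.I * ((η * kx * ky : ℝ)),
        (ku : ℂ) + Complex.I * ((ν * k2 + η * ky ^ 2 : ℝ))]) :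
    Matrix.det (M - ((ku : ℂ) + Complex.I * (ν * k2 : ℝ)) • (1 : Matrix (Fin 3) (Fin 3) ℂ))
      = 0 := by
  subst hM hk2
  exact det_sub_smul_one_eq_zero_of_mulVec_eq_smul (shear_vector_ne_zero hk)
    (ns_symbol_mulVec_shear_vector kx ky ku ρ _ ν η)

open Complex in
/-- The 3×3 Navier–Stokes symbol matrix `M` of the linearized non-ideal compressible
equations has, exactly, the shear eigenvalue `ω_shear = k·u + iνk²` when `k ≠ 0`:
its characteristic polynomial vanishes at `ω_shear`. -/
theorem ns_symbol_shear_eigenvalue (kx ky ux uy ρ ν η πs dπs : ℝ)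
    (hρ : 0 < ρ) (hν : 0 ≤ ν) (hη : 0 ≤ η) (hsound : 0 ≤ πs + ρ * dπs)
    (hk : (kx, ky) ≠ (0, 0))
    (k2 : ℝ) (hk2 : k2 = kx ^ 2 + ky ^ 2)
    (ku : ℝ) (hku : ku = kx * ux + ky * uy)
    (M : Matrix (Fin 3) (Fin 3) ℂ)
    (hM : M = !![(ku : ℂ), (ρ * kx : ℝ), (ρ * ky : ℝ);
      ((πs / ρ + dπs) * kx : ℝ), (ku : ℂ) + Complex.I * ((ν * k2 + η * kx ^ 2 : ℝ)),
        Complex.I * ((η * kx * ky : ℝ));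
      ((πs / ρ + dπs) * ky : ℝ), Complex.I * ((η * kx * ky : ℝ)),
        (ku : ℂ) + Complex.I * ((ν * k2 + η * ky ^ 2 : ℝ))]) :
    Matrix.det (M - ((ku : ℂ) + Complex.I * (ν * k2 : ℝ)) • (1 : Matrix (Fin 3) (Fin 3) ℂ))
      = 0 :=
  ns_symbol_shear_eigenvalue_general kx ky ρ ν η πs dπs hk k2 hk2 ku M hM
end

section
/- For the generic velocity-dependent pressure π*(ρ,u), the eigenvalues of the flux Jacobian of the system ∂tρ + ∂x(ρu) = 0, ∂t(ρu) + ∂x(ρu² + ρπ*) = 0 are c± = u + (∂_uπ*)/2 ± √(((∂_uπ*)/2)² + ∂ρ(ρπ*)), provided the discriminant ((∂_uπ*)/2)² + ∂ρ(ρπ*) is nonnegative; these are always real, so the system is hyperbolic whenever ∂ρ(ρπ*) ≥ 0. -/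
/-! The characteristic polynomial of a `2 × 2` matrix is `λ² - tr λ + det`, with roots
`tr/2 ± √((tr/2)² - det)`. For the flux Jacobian, `tr/2 = u + ∂ᵤπ*/2` and
`(tr/2)² - det = (∂ᵤπ*/2)² + ∂ρ(ρπ*)`. -/

namespace Matrix

variable {K : Type*}

theorem det_fin_two_sub_smul_one [CommRing K] (M : Matrix (Fin 2) (Fin 2) K) (c : K) :
    (M - c • 1).det = c ^ 2 - M.trace * c + M.det := by
  rw [one_fin_two, det_fin_two, det_fin_two M, trace_fin_two]
  simp only [sub_apply, smul_apply, of_apply, cons_val', cons_val_zero, cons_val_one,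
    empty_val', cons_val_fin_one, smul_eq_mul]
  ring

theorem det_fin_two_sub_half_trace_add_smul_one_eq_zero [Field K] [NeZero (2 : K)]
    (M : Matrix (Fin 2) (Fin 2) K) {s : K} (hs : s ^ 2 = (M.trace / 2) ^ 2 - M.det) :
    (M - (M.trace / 2 + s) • 1).det = 0 ∧ (M - (M.trace / 2 - s) • 1).det = 0 := by
  have h2 : (2 : K) ≠ 0 := NeZero.ne 2
  field_simp at hs
  constructor <;>
  · rw [det_fin_two_sub_smul_one]
    field_simp
    linear_combination hs

end Matrix

theorem generalized_flux_jacobian_eigenvalues_general (u : ℝ)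
    (dρ du : ℝ)
    (A : Matrix (Fin 2) (Fin 2) ℝ)
    (hA : A = !![0, 1; -u ^ 2 + dρ - u * du, 2 * u + du]) :
    (0 ≤ dρ → 0 ≤ (du / 2) ^ 2 + dρ) ∧
    (0 ≤ (du / 2) ^ 2 + dρ →
      Matrix.det (A - (u + du / 2 + Real.sqrt ((du / 2) ^ 2 + dρ)) •
        (1 : Matrix (Fin 2) (Fin 2) ℝ)) = 0 ∧
      Matrix.det (A - (u + du / 2 - Real.sqrt ((du / 2) ^ 2 + dρ)) •
        (1 : Matrix (Fin 2) (Fin 2) ℝ)) = 0) := by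
  have htrace : A.trace / 2 = u + du / 2 := by
    rw [hA, Matrix.trace_fin_two_of]
    ring
  have hdisc : (A.trace / 2) ^ 2 - A.det = (du / 2) ^ 2 + dρ := by
    rw [htrace, hA, Matrix.det_fin_two_of]
    ring
  refine ⟨fun hdρ_nonneg => by positivity, fun hD => ?_⟩
  rw [← htrace]
  exact A.det_fin_two_sub_half_trace_add_smul_one_eq_zero (by rw [Real.sq_sqrt hD, hdisc])

/-- For a generic velocity-dependent pressure `π*(ρ,u)`, the eigenvalues of the flux
Jacobian of the system (in conserved variables, the Jacobian is
`!![0, 1; −u² + ∂ρ(ρπ*) − u∂ᵤπ*, 2u + ∂ᵤπ*]`) are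
`c± = u + (∂ᵤπ*)/2 ± √(((∂ᵤπ*)/2)² + ∂ρ(ρπ*))` whenever the discriminant is
nonnegative; in particular the discriminant is nonnegative (hyperbolicity) whenever
`∂ρ(ρπ*) ≥ 0`. -/
theorem generalized_flux_jacobian_eigenvalues (πs : ℝ → ℝ → ℝ) (ρ u : ℝ)
    (dρ du : ℝ)
    (hdρ : dρ = deriv (fun r => r * πs r u) ρ)
    (hdu : du = deriv (fun v => πs ρ v) u)
    (A : Matrix (Fin 2) (Fin 2) ℝ)
    (hA : A = !![0, 1; -u ^ 2 + dρ - u * du, 2 * u + du]) :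
    (0 ≤ dρ → 0 ≤ (du / 2) ^ 2 + dρ) ∧
    (0 ≤ (du / 2) ^ 2 + dρ →
      Matrix.det (A - (u + du / 2 + Real.sqrt ((du / 2) ^ 2 + dρ)) •
        (1 : Matrix (Fin 2) (Fin 2) ℝ)) = 0 ∧
      Matrix.det (A - (u + du / 2 - Real.sqrt ((du / 2) ^ 2 + dρ)) •
        (1 : Matrix (Fin 2) (Fin 2) ℝ)) = 0) :=
  generalized_flux_jacobian_eigenvalues_general u dρ du A hA
end
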